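/- arXiv:2205.13305 — 4 statements merged into one kernel-verified Lean document; each statement's English description precedes it below -/
import Mathlib

section
/- For every integer p ≥ 3, the determinant of the intersection matrix Q_I(p) equals (−1)^{p−1}. -/
open Matrix

/-- Entry of the tridiagonal pattern: 2 on the diagonal, -1 adjacent to it, 0 elsewhere. -/
def triEnt (i j : ℕ) : ℤ :=
  if i = j then 2 else if i + 1 = j ∨ j + 1 = i then -1 else 0

/-- The (1-indexed) entry of the intersection matrix `Q_I(p)`:
the principal submatrix on indices 1,…,p−1 is −J_{p−1}; the principal submatrix on
indices p,…,2p−3 is J_{p−2}; the entries (p−1, 2p−2) and (2p−2, p−1) are −1;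
the entries (p, 2p−2) and (2p−2, p) are 1; all other entries are 0. -/
def QIent (p i j : ℕ) : ℤ :=
  if i ≤ p - 1 ∧ j ≤ p - 1 then -(triEnt i j)
  else if p ≤ i ∧ i ≤ 2*p - 3 ∧ p ≤ j ∧ j ≤ 2*p - 3 then triEnt i j
  else if (i = p - 1 ∧ j = 2*p - 2) ∨ (i = 2*p - 2 ∧ j = p - 1) then -1
  else if (i = p ∧ j = 2*p - 2) ∨ (i = 2*p - 2 ∧ j = p) then 1
  else 0

/-- The intersection matrix `Q_I(p)`, of size (2p−2)×(2p−2). -/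
def QI (p : ℕ) : Matrix (Fin (2*p - 2)) (Fin (2*p - 2)) ℤ :=
  fun i j => QIent p (i.val + 1) (j.val + 1)

/-!
Ordering the indices as 1, …, p−1, 2p−2, p, …, 2p−3 makes `Q_I(p)` a symmetric tridiagonal
matrix with diagonal (−2, …, −2, 0, 2, …, 2) and off-diagonal entries ±1, the intersection
matrix of a chain. Its leading principal minors satisfy `D (k + 2) = d (k + 1) * D (k + 1) - D k`.
Along the stretch of −2's this gives `D k = (-1) ^ k * (k + 1)`, up to `D (p - 1) = (-1) ^ (p - 1) * p`;
the zero gives `D p = (-1) ^ (p - 1) * (p - 1)`, and along the stretch of 2's the minors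
`D (p - 1 + j) = (-1) ^ (p - 1) * (p - j)` form an arithmetic progression, ending at `(-1) ^ (p - 1)`.
-/

section SymmTridiagonal

variable {R : Type*} [CommRing R]

def symmTridiagonal (d e : ℕ → R) (n : ℕ) : Matrix (Fin n) (Fin n) R :=
  Matrix.of fun i j =>
    if i.val = j.val then d i else if i.val + 1 = j.val then e i
    else if j.val + 1 = i.val then e j else 0

lemma symmTridiagonal_apply_eq_zero (d e : ℕ → R) {n : ℕ} {i j : Fin n}
    (h : i.val + 1 < j.val ∨ j.val + 1 < i.val) : symmTridiagonal d e n i j = 0 := by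
  simp only [symmTridiagonal, of_apply]
  split_ifs <;> first | rfl | omega

lemma det_symmTridiagonal_succ_succ (d e : ℕ → R) (n : ℕ) :
    (symmTridiagonal d e (n + 2)).det =
      d (n + 1) * (symmTridiagonal d e (n + 1)).det - e n ^ 2 * (symmTridiagonal d e n).det := by
  set A := symmTridiagonal d e (n + 2)
  have hlast : A.submatrix (Fin.last (n + 1)).succAbove (Fin.last (n + 1)).succAbove =
      symmTridiagonal d e (n + 1) := by
    ext i j; simp [A, symmTridiagonal]
  set B := A.submatrix (Fin.last (n + 1)).succAbove (Fin.castSucc (Fin.last n)).succAbove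
  have hB : B.det = e n * (symmTridiagonal d e n).det := by
    rw [det_succ_column B (Fin.last n), Fin.sum_univ_castSucc, Finset.sum_eq_zero]
    · have : B.submatrix (Fin.last n).succAbove (Fin.last n).succAbove = symmTridiagonal d e n := by
        ext i j
        simp [B, A, symmTridiagonal, Fin.succAbove_of_castSucc_lt _ _ (Fin.castSucc_lt_last _)]
      rw [this]
      simp [B, A, symmTridiagonal]
    · intro i _
      rw [show B i.castSucc (Fin.last n) = 0 from symmTridiagonal_apply_eq_zero d e (by simp)]
      ring
  rw [det_succ_row A (Fin.last (n + 1)), Fin.sum_univ_castSucc, Fin.sum_univ_castSucc,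
    Finset.sum_eq_zero, hlast, hB]
  · have hd : A (Fin.last (n + 1)) (Fin.last (n + 1)) = d (n + 1) := by simp [A, symmTridiagonal]
    have he : A (Fin.last (n + 1)) (Fin.last n).castSucc = e n := by
      simp [A, symmTridiagonal, show n + 1 + 1 ≠ n by omega]
    rw [hd, he, Fin.val_last, Fin.val_castSucc, Fin.val_last, zero_add,
      Odd.neg_one_pow ⟨n, by ring⟩, Even.neg_one_pow ⟨n + 1, rfl⟩]
    ring
  · intro j _
    rw [show A (Fin.last (n + 1)) j.castSucc.castSucc = 0 from
      symmTridiagonal_apply_eq_zero d e (by simp)]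
    ring

end SymmTridiagonal

lemma recurrence_double_root_solution {R : Type*} [CommRing R] {x : ℕ → R} {ε : R}
    (hε : ε * ε = 1) {N : ℕ} (hrec : ∀ k, k + 2 ≤ N → x (k + 2) = 2 * ε * x (k + 1) - x k) :
    ∀ j ≤ N, x j = ε ^ j * (x 0 + j * (ε * x 1 - x 0)) := by
  intro j
  induction j using Nat.twoStepInduction with
  | zero => simp
  | one => intro _; linear_combination (-x 1) * hε
  | more n ih0 ih1 =>
    intro hn
    rw [hrec n hn, ih1 (by omega), ih0 (by omega)]
    push_cast
    linear_combination (ε ^ n * (x 0 + n * (ε * x 1 - x 0))) * hε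

/-- The `k`-th index (0-based) of `QI p` along the chain. -/
def pathVertex (p k : ℕ) : ℕ := if k < p - 1 then k else if k = p - 1 then 2 * p - 3 else k - 1

lemma pathVertex_of_lt {p k : ℕ} (h : k < p - 1) : pathVertex p k = k := if_pos h

lemma pathVertex_self (p : ℕ) : pathVertex p (p - 1) = 2 * p - 3 := by
  simp [pathVertex]

lemma pathVertex_of_le {p k : ℕ} (h : p ≤ k) : pathVertex p k = k - 1 := by
  simp only [pathVertex]
  split_ifs <;> omega

noncomputable def pathOrder (p : ℕ) : Fin (2 * p - 2) ≃ Fin (2 * p - 2) :=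
  Equiv.ofBijective (fun k => ⟨pathVertex p k, by unfold pathVertex; split_ifs <;> omega⟩) <|
    Finite.injective_iff_bijective.mp fun k l h => by
      simp only [Fin.mk.injEq, pathVertex] at h
      ext
      split_ifs at h <;> omega

def pathDiag (p k : ℕ) : ℤ := if k < p - 1 then -2 else if k = p - 1 then 0 else 2

def pathOffDiag (p k : ℕ) : ℤ := if k + 2 = p ∨ p ≤ k then -1 else 1

lemma pathOffDiag_sq (p k : ℕ) : pathOffDiag p k ^ 2 = 1 := by
  unfold pathOffDiag; split_ifs <;> rfl

lemma QI_submatrix_pathOrder {p : ℕ} (hp : 3 ≤ p) :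
    (QI p).submatrix (pathOrder p) (pathOrder p) =
      symmTridiagonal (pathDiag p) (pathOffDiag p) (2 * p - 2) := by
  ext ⟨a, ha⟩ ⟨b, hb⟩
  simp only [submatrix_apply, pathOrder, Equiv.ofBijective_apply, QI, symmTridiagonal, of_apply]
  rcases (by omega : a < p - 1 ∨ a = p - 1 ∨ p ≤ a) with ha' | rfl | ha' <;>
  rcases (by omega : b < p - 1 ∨ b = p - 1 ∨ p ≤ b) with hb' | rfl | hb' <;>
  simp only [pathVertex_of_lt, pathVertex_self, pathVertex_of_le, *] <;>
  unfold QIent triEnt pathDiag pathOffDiag <;>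
  grind

lemma det_pathTridiagonal {p : ℕ} (hp : 3 ≤ p) :
    (symmTridiagonal (pathDiag p) (pathOffDiag p) (2 * p - 2)).det = (-1) ^ (p - 1) := by
  set D : ℕ → ℤ := fun n => (symmTridiagonal (pathDiag p) (pathOffDiag p) n).det
  have hrec (n : ℕ) : D (n + 2) = pathDiag p (n + 1) * D (n + 1) - D n := by
    simp only [D, det_symmTridiagonal_succ_succ, pathOffDiag_sq, one_mul]
  have hD0 : D 0 = 1 := det_isEmpty
  have hD1 : D 1 = -2 := by
    simp [D, det_unique, symmTridiagonal, pathDiag, show 0 < p - 1 by omega]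
  have hA : ∀ k ≤ p - 1, D k = (-1) ^ k * (k + 1) := by
    intro k hk
    rw [recurrence_double_root_solution (x := D) (ε := -1) (by norm_num)
      (fun n hn => by rw [hrec, pathDiag, if_pos (by omega)]; ring) k hk, hD0, hD1]
    ring
  have hDp : D p = (-1) ^ (p - 1) * (p - 1) := by
    have := hrec (p - 2)
    rw [show p - 2 + 2 = p by omega, show p - 2 + 1 = p - 1 by omega, pathDiag,
      if_neg (lt_irrefl _), if_pos rfl, hA (p - 2) (by omega)] at this
    rw [this, show p - 1 = p - 2 + 1 by omega, Nat.cast_sub (by omega)]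
    push_cast
    ring
  have hB := recurrence_double_root_solution (x := fun k => D (p - 1 + k)) (ε := 1) (N := p - 1)
    (by norm_num) (fun n _ => by
      simp only [← add_assoc, hrec]
      rw [pathDiag, if_neg (by omega), if_neg (by omega)]
      ring) (p - 1) le_rfl
  simp only [add_zero, show p - 1 + 1 = p by omega, hDp, hA _ le_rfl, one_pow, one_mul] at hB
  change D (2 * p - 2) = _
  rw [show 2 * p - 2 = p - 1 + (p - 1) by omega, hB, Nat.cast_sub (by omega)]
  push_cast
  ring

theorem det_QI (p : ℕ) (hp : 3 ≤ p) : (QI p).det = (-1) ^ (p - 1) := by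
  rw [← det_submatrix_equiv_self (pathOrder p) (QI p), QI_submatrix_pathOrder hp]
  exact det_pathTridiagonal hp
end

section
/- For every integer p ≥ 3, the matrix Q_I(p), regarded as a real symmetric matrix, has exactly p−1 positive eigenvalues and exactly p−1 negative eigenvalues, counted with multiplicity; in particular its signature is 0. -/
/-!
As a quadratic form on blocks of sizes `p - 1`, `p - 2`, `1`, `Q_I(p)` reads
`Q(x, y, z) = -xᵀ J x + yᵀ J y + 2 z (y₁ - x_{p-1})`, and
`xᵀ J_n x = x₁² + Σ (x_{k+1} - x_k)² + x_n²` is positive definite. So `Q` is negative definite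
on the first block. Adding to the second block a vector `w` that is `Q`-orthogonal to it and has
`Q(w) > 0` gives a subspace on which `Q(y + t w) = yᵀ J y + Q(w) t²` is positive definite. Both
subspaces have dimension `p - 1`, and a definite subspace meets the span of the eigenvectors of
the other signs trivially, so each sign occurs at least `p - 1` times among the `2p - 2`
eigenvalues, hence exactly `p - 1` times.
-/

open Matrix

open Finset

namespace Matrix.IsHermitian

variable {n : Type*} [Fintype n] [DecidableEq n] {M : Matrix n n ℝ} (hM : M.IsHermitian)
variable {E : Type*} [AddCommGroup E] [Module ℝ E]

theorem dotProduct_mulVec_self_eq_sum_eigenvalues (x : n → ℝ) :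
    x ⬝ᵥ M *ᵥ x = ∑ i, hM.eigenvalues i *
      ((star (hM.eigenvectorUnitary : Matrix n n ℝ) *ᵥ x) i) ^ 2 := by
  have hxU : x ᵥ* (hM.eigenvectorUnitary : Matrix n n ℝ) =
      star (hM.eigenvectorUnitary : Matrix n n ℝ) *ᵥ x := by
    ext i
    simp [vecMul, mulVec, dotProduct, star_apply, mul_comm]
  conv_lhs => rw [hM.spectral_theorem, Unitary.conjStarAlgAut_apply]
  rw [← mulVec_mulVec, ← mulVec_mulVec, dotProduct_mulVec, hxU, dotProduct]
  simp [mulVec_diagonal, sq, mul_left_comm]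

theorem finrank_le_card_of_eigencoord_ne_zero (S : Finset n) (f : E →ₗ[ℝ] n → ℝ)
    (hf : ∀ c ≠ 0, ∃ i ∈ S, (star (hM.eigenvectorUnitary : Matrix n n ℝ) *ᵥ f c) i ≠ 0) :
    Module.finrank ℝ E ≤ #S := by
  let T : E →ₗ[ℝ] S → ℝ := LinearMap.funLeft ℝ ℝ Subtype.val ∘ₗ
    (star (hM.eigenvectorUnitary : Matrix n n ℝ)).mulVecLin ∘ₗ f
  have hT : Function.Injective T := by
    rw [← LinearMap.ker_eq_bot, LinearMap.ker_eq_bot']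
    intro c hc
    by_contra hc0
    obtain ⟨i, hi, hne⟩ := hf c hc0
    exact hne (congrFun hc ⟨i, hi⟩)
  simpa using LinearMap.finrank_le_finrank_of_injective hT

theorem finrank_le_card_eigenvalues_pos (f : E →ₗ[ℝ] n → ℝ)
    (hf : ∀ c ≠ 0, 0 < f c ⬝ᵥ M *ᵥ f c) :
    Module.finrank ℝ E ≤ #{i | 0 < hM.eigenvalues i} := by
  refine hM.finrank_le_card_of_eigencoord_ne_zero _ f fun c hc => ?_
  by_contra! h
  refine (hf c hc).not_ge ?_
  rw [hM.dotProduct_mulVec_self_eq_sum_eigenvalues]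
  refine sum_nonpos fun i _ => ?_
  by_cases hi : 0 < hM.eigenvalues i
  · simp [h i (by simpa using hi)]
  · exact mul_nonpos_of_nonpos_of_nonneg (not_lt.mp hi) (sq_nonneg _)

theorem finrank_le_card_eigenvalues_neg (f : E →ₗ[ℝ] n → ℝ)
    (hf : ∀ c ≠ 0, f c ⬝ᵥ M *ᵥ f c < 0) :
    Module.finrank ℝ E ≤ #{i | hM.eigenvalues i < 0} := by
  refine hM.finrank_le_card_of_eigencoord_ne_zero _ f fun c hc => ?_
  by_contra! h
  refine (hf c hc).not_ge ?_
  rw [hM.dotProduct_mulVec_self_eq_sum_eigenvalues]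
  refine sum_nonneg fun i _ => ?_
  by_cases hi : hM.eigenvalues i < 0
  · simp [h i (by simpa using hi)]
  · exact mul_nonneg (not_lt.mp hi) (sq_nonneg _)

theorem card_eigenvalues_pos_neg_of_definite {F : Type*} [AddCommGroup F] [Module ℝ F]
    (f : E →ₗ[ℝ] n → ℝ) (g : F →ₗ[ℝ] n → ℝ)
    (hf : ∀ c ≠ 0, 0 < f c ⬝ᵥ M *ᵥ f c) (hg : ∀ c ≠ 0, g c ⬝ᵥ M *ᵥ g c < 0)
    (hdim : Module.finrank ℝ E + Module.finrank ℝ F = Fintype.card n) :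
    #{i | 0 < hM.eigenvalues i} = Module.finrank ℝ E ∧
      #{i | hM.eigenvalues i < 0} = Module.finrank ℝ F := by
  have hpos := hM.finrank_le_card_eigenvalues_pos f hf
  have hneg := hM.finrank_le_card_eigenvalues_neg g hg
  have hdisj : Disjoint (univ.filter fun i => 0 < hM.eigenvalues i)
      (univ.filter fun i => hM.eigenvalues i < 0) :=
    disjoint_filter.mpr fun i _ h1 h2 => (h1.trans h2).false
  have htotal := (card_union_of_disjoint hdisj).symm.trans_le (card_le_univ _)
  omega

end Matrix.IsHermitian

/-- `xᵀ J_{n+1} x` in the coordinates `x 0, …, x n`. -/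
def pathForm (n : ℕ) (x : ℕ → ℝ) : ℝ :=
  x 0 ^ 2 + ∑ k ∈ range n, (x (k + 1) - x k) ^ 2 + x n ^ 2

theorem pathForm_congr {n : ℕ} {x y : ℕ → ℝ} (h : ∀ k ≤ n, x k = y k) :
    pathForm n x = pathForm n y := by
  unfold pathForm
  rw [h 0 (Nat.zero_le n), h n le_rfl]
  congr 2
  refine sum_congr rfl fun k hk => ?_
  rw [mem_range] at hk
  rw [h k hk.le, h (k + 1) hk]

theorem pathForm_nonneg (n : ℕ) (x : ℕ → ℝ) : 0 ≤ pathForm n x := by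
  unfold pathForm
  have := sum_nonneg fun k (_ : k ∈ range n) => sq_nonneg (x (k + 1) - x k)
  positivity

theorem pathForm_pos {n : ℕ} {x : ℕ → ℝ} (h : ∃ k ≤ n, x k ≠ 0) : 0 < pathForm n x := by
  refine (pathForm_nonneg n x).lt_of_ne fun h0 => ?_
  obtain ⟨k, hk, hxk⟩ := h
  unfold pathForm at h0
  have hsum := sum_nonneg fun k (_ : k ∈ range n) => sq_nonneg (x (k + 1) - x k)
  have hx0 : x 0 = 0 := by nlinarith [sq_nonneg (x 0), sq_nonneg (x n)]
  have hsum0 : ∑ k ∈ range n, (x (k + 1) - x k) ^ 2 = 0 := by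
    linarith [sq_nonneg (x 0), sq_nonneg (x n)]
  have hdiff := (sum_eq_zero_iff_of_nonneg fun k (_ : k ∈ range n) => sq_nonneg _).mp hsum0
  have hzero : ∀ k ≤ n, x k = 0 := by
    intro k hk
    induction k with
    | zero => exact hx0
    | succ k ih =>
      have := hdiff k (mem_range.mpr hk)
      rw [ih (by omega)] at this
      simpa using this
  exact hxk (hzero k hk)

theorem triEnt_eq_ite (i j : ℕ) :
    triEnt i j = 2 * (if i = j then 1 else 0) - (if i + 1 = j then 1 else 0)
      - (if j + 1 = i then 1 else 0) := by
  unfold triEnt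
  split_ifs <;> omega

theorem triEnt_add_left (m i j : ℕ) : triEnt (m + i) (m + j) = triEnt i j := by
  simp only [triEnt_eq_ite]
  simp only [add_assoc, add_right_inj]

theorem sum_triEnt_mul (n : ℕ) (x : ℕ → ℝ) :
    ∑ j ∈ range (n + 1), ∑ k ∈ range (n + 1), (triEnt (j + 1) (k + 1) : ℝ) * x j * x k =
      pathForm n x := by
  have hnext : ∑ j ∈ range (n + 1), ∑ k ∈ range (n + 1), (if j + 1 = k then x j * x k else 0) =
      ∑ j ∈ range n, x j * x (j + 1) := by
    simp only [sum_ite_eq, mem_range]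
    rw [sum_range_succ, if_neg (by omega), add_zero]
    exact sum_congr rfl fun j hj => if_pos (by rw [mem_range] at hj; omega)
  have hsq : ∑ j ∈ range n, (x (j + 1) - x j) ^ 2 = ∑ j ∈ range n, x (j + 1) ^ 2 +
      ∑ j ∈ range n, x j ^ 2 - 2 * ∑ j ∈ range n, x j * x (j + 1) := by
    simp only [← sum_add_distrib, mul_sum, ← sum_sub_distrib]
    exact sum_congr rfl fun j _ => by ring
  have hprev : ∑ j ∈ range (n + 1), ∑ k ∈ range (n + 1), (if k + 1 = j then x j * x k else 0) =
      ∑ j ∈ range n, x j * x (j + 1) := by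
    rw [sum_comm, ← hnext]
    exact sum_congr rfl fun j _ => sum_congr rfl fun k _ => by rw [mul_comm]
  simp only [triEnt_eq_ite]
  push_cast
  simp only [sub_mul, mul_assoc, ite_mul, one_mul, zero_mul, sum_sub_distrib, ← mul_sum]
  rw [hnext, hprev]
  simp only [sum_ite_eq, sum_ite_mem, inter_self]
  rw [pathForm, hsq]
  have h1 := sum_range_succ (fun j => x j ^ 2) n
  have h2 := sum_range_succ' (fun j => x j ^ 2) n
  simp only [sq] at h1 h2 ⊢
  linarith

theorem pathForm_add_ramp (n : ℕ) (y : ℕ → ℝ) (β : ℝ) :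
    pathForm n (fun k => y k + β * (n + 1 - k)) =
      pathForm n y + 2 * β * (n + 2) * y 0 + β ^ 2 * (n + 1) * (n + 2) := by
  have hstep : ∀ k ∈ range n, (y (k + 1) + β * (n + 1 - ↑(k + 1)) - (y k + β * (n + 1 - k))) ^ 2
      = (y (k + 1) - y k) ^ 2 - 2 * β * (y (k + 1) - y k) + β ^ 2 := by
    intro k _
    push_cast
    ring
  simp only [pathForm]
  rw [sum_congr rfl hstep, sum_add_distrib, sum_sub_distrib, ← mul_sum, sum_range_sub, sum_const,
    card_range, nsmul_eq_mul]
  push_cast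
  ring

theorem pathForm_linear (n : ℕ) (α : ℝ) :
    pathForm n (fun k => α * (k + 1)) = α ^ 2 * (n + 1) * (n + 2) := by
  have hstep : ∀ k ∈ range n, (α * (↑(k + 1) + 1) - α * (k + 1)) ^ 2 = α ^ 2 := by
    intro k _
    push_cast
    ring
  simp only [pathForm, sum_congr rfl hstep, sum_const, card_range, nsmul_eq_mul]
  push_cast
  ring

theorem QIent_succ_succ (s j k : ℕ) :
    QIent (s + 3) (j + 1) (k + 1) =
      (if j ∈ range (s + 2) ∧ k ∈ range (s + 2) then -triEnt (j + 1) (k + 1) else 0)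
      + (if j ∈ Ico (s + 2) (2 * s + 3) ∧ k ∈ Ico (s + 2) (2 * s + 3) then
          triEnt (j + 1) (k + 1) else 0)
      + (if j = s + 2 ∧ k = 2 * s + 3 then 1 else 0) + (if j = 2 * s + 3 ∧ k = s + 2 then 1 else 0)
      - (if j = s + 1 ∧ k = 2 * s + 3 then 1 else 0)
      - (if j = 2 * s + 3 ∧ k = s + 1 then 1 else 0) := by
  simp only [QIent, mem_range, mem_Ico]
  rcases lt_or_ge j (s + 2) with hj | hj <;> rcases lt_or_ge k (s + 2) with hk | hk <;>
    simp (disch := omega) only [if_pos, if_neg] <;> (try split_ifs) <;> omega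

theorem sum_sum_ite_mem_and_mem {ι M : Type*} [DecidableEq ι] [AddCommMonoid M] {R A : Finset ι}
    (hA : A ⊆ R) (f : ι → ι → M) :
    ∑ j ∈ R, ∑ k ∈ R, (if j ∈ A ∧ k ∈ A then f j k else 0) = ∑ j ∈ A, ∑ k ∈ A, f j k := by
  simp only [ite_and, sum_ite_irrel, sum_const_zero, sum_ite_mem, inter_eq_right.mpr hA]

theorem sum_QIent_mul (s : ℕ) (x : ℕ → ℝ) :
    ∑ j ∈ range (2 * s + 4), ∑ k ∈ range (2 * s + 4),
        (QIent (s + 3) (j + 1) (k + 1) : ℝ) * x j * x k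
      = -pathForm (s + 1) x + pathForm s (fun k => x (s + 2 + k))
        + 2 * x (2 * s + 3) * (x (s + 2) - x (s + 1)) := by
  simp only [QIent_succ_succ]
  push_cast
  simp only [add_mul, sub_mul, ite_mul, zero_mul, one_mul, neg_mul, sum_add_distrib,
    sum_sub_distrib]
  rw [sum_sum_ite_mem_and_mem (range_subset_range.mpr (by omega)),
    sum_sum_ite_mem_and_mem fun j hj => by rw [mem_Ico] at hj; rw [mem_range]; omega]
  have hA : ∑ j ∈ range (s + 2), ∑ k ∈ range (s + 2), (triEnt (j + 1) (k + 1) : ℝ) * x j * x k =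
      pathForm (s + 1) x := sum_triEnt_mul (s + 1) x
  have hB : ∑ j ∈ Ico (s + 2) (2 * s + 3), ∑ k ∈ Ico (s + 2) (2 * s + 3),
      (triEnt (j + 1) (k + 1) : ℝ) * x j * x k = pathForm s (fun k => x (s + 2 + k)) := by
    rw [← sum_triEnt_mul]
    simp only [sum_Ico_eq_sum_range, show 2 * s + 3 - (s + 2) = s + 1 by omega, add_assoc,
      triEnt_add_left]
  simp (disch := omega) only [ite_and, sum_ite_irrel, sum_ite_eq', mem_range, if_pos,
    sum_const_zero, sum_neg_distrib, hA, hB]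
  ring

theorem dotProduct_QI_mulVec (s : ℕ) (x : ℕ → ℝ) :
    (x ∘ Fin.val) ⬝ᵥ (QI (s + 3)).map (Int.cast : ℤ → ℝ) *ᵥ (x ∘ Fin.val) =
      -pathForm (s + 1) x + pathForm s (fun k => x (s + 2 + k))
        + 2 * x (2 * s + 3) * (x (s + 2) - x (s + 1)) := by
  rw [← sum_QIent_mul, show 2 * s + 4 = 2 * (s + 3) - 2 by omega]
  simp only [dotProduct, mulVec, map_apply, QI, Function.comp_apply, mul_sum, sum_range]
  exact sum_congr rfl fun i _ => sum_congr rfl fun j _ => by ring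

/-- The vector `(x 0, …, x (s+1) | y 0, …, y s | z)` in the 0-based coordinates of `Q_I(s + 3)`. -/
def blockVec (s : ℕ) (x y : ℕ → ℝ) (z : ℝ) : ℕ → ℝ :=
  fun j => if j < s + 2 then x j else if j < 2 * s + 3 then y (j - (s + 2)) else z

theorem dotProduct_QI_mulVec_blockVec (s : ℕ) (x y : ℕ → ℝ) (z : ℝ) :
    (blockVec s x y z ∘ Fin.val) ⬝ᵥ (QI (s + 3)).map (Int.cast : ℤ → ℝ) *ᵥ
      (blockVec s x y z ∘ Fin.val) =
        -pathForm (s + 1) x + pathForm s y + 2 * z * (y 0 - x (s + 1)) := by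
  have hx : pathForm (s + 1) (blockVec s x y z) = pathForm (s + 1) x :=
    pathForm_congr fun k hk => if_pos (by omega)
  have hy : pathForm s (fun k => blockVec s x y z (s + 2 + k)) = pathForm s y :=
    pathForm_congr fun k hk => by
      simp (disch := omega) only [blockVec, if_pos, if_neg, Nat.add_sub_cancel_left]
  rw [dotProduct_QI_mulVec, hx, hy]
  simp (disch := omega) only [blockVec, if_pos, if_neg, Nat.sub_self]

def finExtend {m : ℕ} (c : Fin m → ℝ) : ℕ → ℝ := fun j => if h : j < m then c ⟨j, h⟩ else 0

@[simp]
theorem finExtend_val {m : ℕ} (c : Fin m → ℝ) (i : Fin m) : finExtend c i = c i :=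
  dif_pos i.isLt

def firstBlockEmbedding (s : ℕ) : (Fin (s + 2) → ℝ) →ₗ[ℝ] Fin (2 * (s + 3) - 2) → ℝ where
  toFun c := blockVec s (finExtend c) 0 0 ∘ Fin.val
  map_add' c d := by
    ext j
    simp only [blockVec, finExtend, Function.comp_apply, Pi.add_apply]
    split_ifs <;> simp
  map_smul' a c := by
    ext j
    simp only [blockVec, finExtend, Function.comp_apply, Pi.smul_apply, smul_eq_mul,
      RingHom.id_apply]
    split_ifs <;> simp

/-- `(y, t) ↦ y + t w`. The second block of `w` solves `J w₂ = -z e₁`, making `w` `Q`-orthogonal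
to the second block; given `z`, its first block maximizes `Q(w)`. -/
def positiveEmbedding (s : ℕ) : ((Fin (s + 1) → ℝ) × ℝ) →ₗ[ℝ] Fin (2 * (s + 3) - 2) → ℝ where
  toFun v := blockVec s (fun j => -((s + 2) * v.2) * (j + 1))
    (fun k => finExtend v.1 k + -((s + 3) * v.2) * (s + 1 - k)) ((s + 2) * (s + 3) * v.2) ∘ Fin.val
  map_add' v w := by
    ext j
    simp only [blockVec, finExtend, Function.comp_apply, Pi.add_apply, Prod.fst_add, Prod.snd_add]
    split_ifs <;> ring
  map_smul' a v := by
    ext j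
    simp only [blockVec, finExtend, Function.comp_apply, Pi.smul_apply, smul_eq_mul,
      RingHom.id_apply, Prod.smul_fst, Prod.smul_snd]
    split_ifs <;> ring

theorem dotProduct_QI_mulVec_firstBlockEmbedding_neg (s : ℕ) (c : Fin (s + 2) → ℝ) (hc : c ≠ 0) :
    firstBlockEmbedding s c ⬝ᵥ (QI (s + 3)).map (Int.cast : ℤ → ℝ) *ᵥ firstBlockEmbedding s c
      < 0 := by
  obtain ⟨i, hi⟩ := Function.ne_iff.mp hc
  have hpos : 0 < pathForm (s + 1) (finExtend c) :=
    pathForm_pos ⟨i, by omega, by rwa [finExtend_val]⟩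
  have hzero : pathForm s 0 = 0 := by simp [pathForm]
  simp only [firstBlockEmbedding, LinearMap.coe_mk, AddHom.coe_mk]
  rw [dotProduct_QI_mulVec_blockVec, hzero]
  linarith

theorem dotProduct_QI_mulVec_positiveEmbedding (s : ℕ) (v : (Fin (s + 1) → ℝ) × ℝ) :
    positiveEmbedding s v ⬝ᵥ (QI (s + 3)).map (Int.cast : ℤ → ℝ) *ᵥ positiveEmbedding s v =
      pathForm s (finExtend v.1) + (s + 2) * (s + 3) * v.2 ^ 2 := by
  simp only [positiveEmbedding, LinearMap.coe_mk, AddHom.coe_mk]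
  rw [dotProduct_QI_mulVec_blockVec, pathForm_linear, pathForm_add_ramp]
  push_cast
  ring

theorem dotProduct_QI_mulVec_positiveEmbedding_pos (s : ℕ) (v : (Fin (s + 1) → ℝ) × ℝ)
    (hv : v ≠ 0) :
    0 < positiveEmbedding s v ⬝ᵥ (QI (s + 3)).map (Int.cast : ℤ → ℝ) *ᵥ positiveEmbedding s v := by
  rw [dotProduct_QI_mulVec_positiveEmbedding]
  by_cases ht : v.2 = 0
  · obtain ⟨i, hi⟩ := Function.ne_iff.mp fun hy => hv (Prod.ext hy ht)
    have := pathForm_pos (n := s) (x := finExtend v.1) ⟨i, by omega, by rwa [finExtend_val]⟩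
    simpa [ht] using this
  · have := pathForm_nonneg s (finExtend v.1)
    positivity

theorem QI_eigenvalue_counts (p : ℕ) (hp : 3 ≤ p)
    (hM : ((QI p).map (Int.cast : ℤ → ℝ)).IsHermitian) :
    (Finset.univ.filter (fun i => 0 < hM.eigenvalues i)).card = p - 1 ∧
    (Finset.univ.filter (fun i => hM.eigenvalues i < 0)).card = p - 1 := by
  obtain ⟨s, rfl⟩ : ∃ s, p = s + 3 := ⟨p - 3, by omega⟩
  have h := hM.card_eigenvalues_pos_neg_of_definite (positiveEmbedding s) (firstBlockEmbedding s)
    (dotProduct_QI_mulVec_positiveEmbedding_pos s) (dotProduct_QI_mulVec_firstBlockEmbedding_neg s)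
    (by simp only [Module.finrank_prod, Module.finrank_fin_fun, Module.finrank_self,
      Fintype.card_fin]; omega)
  simpa using h
end

section
/- For all integers p, q with p ≥ 3 and q ≥ p + 2, the matrix Q_{I-I}(p, q), regarded as a real symmetric matrix, has exactly q−1 positive eigenvalues and exactly q−1 negative eigenvalues, counted with multiplicity; in particular its signature is 0. -/
open Matrix

/-- The (1-indexed) entry of the intersection matrix `Q_{I-I}(p, q)`:
the principal submatrix on indices 1,…,p−2 is J_{p−2}; on indices p−1,…,q−3 it is
J_{q−p−1}; on indices q−2,…,2q−4 it is −J_{q−1}; writing α = 2q−3 and β = 2q−2,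
the entry (α, α) is 2, the entry (β, β) is 0, the entries (α, p−2), (p−2, α),
(α, p−1), (p−1, α), (β, q−3), (q−3, β) are 1, the entries (β, q−2) and (q−2, β)
are −1, and all other entries (including (α, β) and (β, α)) are 0. -/
def QIIent (p q i j : ℕ) : ℤ :=
  if i ≤ p - 2 ∧ j ≤ p - 2 then triEnt i j
  else if p - 1 ≤ i ∧ i ≤ q - 3 ∧ p - 1 ≤ j ∧ j ≤ q - 3 then triEnt i j
  else if q - 2 ≤ i ∧ i ≤ 2*q - 4 ∧ q - 2 ≤ j ∧ j ≤ 2*q - 4 then -(triEnt i j)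
  else if i = 2*q - 3 ∧ j = 2*q - 3 then 2
  else if (i = 2*q - 3 ∧ (j = p - 2 ∨ j = p - 1)) ∨ (j = 2*q - 3 ∧ (i = p - 2 ∨ i = p - 1)) then 1
  else if (i = 2*q - 2 ∧ j = q - 3) ∨ (j = 2*q - 2 ∧ i = q - 3) then 1
  else if (i = 2*q - 2 ∧ j = q - 2) ∨ (j = 2*q - 2 ∧ i = q - 2) then -1
  else 0

/-- The intersection matrix `Q_{I-I}(p, q)`, of size (2q−2)×(2q−2). -/
def QI_I (p q : ℕ) : Matrix (Fin (2*q - 2)) (Fin (2*q - 2)) ℤ :=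
  fun i j => QIIent p q (i.val + 1) (j.val + 1)

/-!
Reorder the basis along the path 1, …, p−2, α, p−1, …, q−3, β, q−2, …, 2q−4 and change the
signs of α and β: the matrix becomes the tridiagonal matrix `T` with diagonal
(2, …, 2, 0, −2, …, −2) (q − 2 twos, q − 1 minus twos), i.e. the Cartan matrix `A_{q−2}` and
`−A_{q−1}` glued through the vertex β. Since `A_n = Dᵀ D` for an injective difference matrix
`D`, `A_n` is positive definite; so the form of `T` is negative definite on the last q − 1
coordinates, and positive definite on the first q − 2 coordinates together with the solution `y`
of `T y = e_β`, which is `T`-orthogonal to them and has `yᵀ T y = q (q − 1) > 0`. A form that is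
positive definite on a k-dimensional space has at least k positive eigenvalues, so
`Q_{I-I}(p, q)` has at least q − 1 eigenvalues of each sign, out of 2q − 2.
-/

open Matrix Finset Module

section Inertia

variable {ι : Type*} [Fintype ι]

theorem finrank_le_card_pos_of_sum_mul_sq_pos {V : Type*} [AddCommGroup V] [Module ℝ V]
    [FiniteDimensional ℝ V] (f : V →ₗ[ℝ] ι → ℝ) (w : ι → ℝ)
    (hf : ∀ v ≠ 0, 0 < ∑ i, w i * f v i ^ 2) :
    finrank ℝ V ≤ #{i | 0 < w i} := by
  set S : Finset ι := {i | 0 < w i}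
  let g : V →ₗ[ℝ] S → ℝ := LinearMap.funLeft ℝ ℝ Subtype.val ∘ₗ f
  have hg : Function.Injective g := by
    rw [← LinearMap.ker_eq_bot, LinearMap.ker_eq_bot']
    intro v hv
    by_contra hne
    have hvanish : ∀ i ∈ S, f v i = 0 := fun i hi => congrFun hv ⟨i, hi⟩
    have hle : ∑ i, w i * f v i ^ 2 ≤ 0 := sum_nonpos fun i _ => by
      by_cases hi : i ∈ S
      · simp [hvanish i hi]
      · exact mul_nonpos_of_nonpos_of_nonneg (by simpa [S] using hi) (sq_nonneg _)
    exact (hf v hne).not_ge hle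
  simpa using LinearMap.finrank_le_finrank_of_injective hg

variable [DecidableEq ι]

theorem Matrix.IsHermitian.dotProduct_mulVec_eq_sum_eigenvalues {A : Matrix ι ι ℝ}
    (hA : A.IsHermitian) (x : ι → ℝ) :
    x ⬝ᵥ A *ᵥ x =
      ∑ i, hA.eigenvalues i * (star (hA.eigenvectorUnitary : Matrix ι ι ℝ) *ᵥ x) i ^ 2 := by
  set U : Matrix ι ι ℝ := ↑hA.eigenvectorUnitary with hU
  conv_lhs => rw [hA.spectral_theorem, Unitary.conjStarAlgAut_apply]
  have hstar : star U = Uᵀ := by ext; simp [U]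
  rw [← mulVec_mulVec, ← mulVec_mulVec, dotProduct_mulVec, ← mulVec_transpose, ← hstar, ← hU]
  simp only [dotProduct, mulVec_diagonal, Function.comp_apply, RCLike.ofReal_real_eq_id, id]
  exact sum_congr rfl fun i _ => by ring

variable {V : Type*} [AddCommGroup V] [Module ℝ V] [FiniteDimensional ℝ V]

theorem Matrix.IsHermitian.finrank_le_card_pos_eigenvalues {A : Matrix ι ι ℝ}
    (hA : A.IsHermitian) (L : V →ₗ[ℝ] ι → ℝ) (hL : ∀ v ≠ 0, 0 < L v ⬝ᵥ A *ᵥ L v) :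
    finrank ℝ V ≤ #{i | 0 < hA.eigenvalues i} :=
  finrank_le_card_pos_of_sum_mul_sq_pos
    ((star (hA.eigenvectorUnitary : Matrix ι ι ℝ)).mulVecLin ∘ₗ L) _
    fun v hv => by simpa [← hA.dotProduct_mulVec_eq_sum_eigenvalues] using hL v hv

theorem Matrix.IsHermitian.finrank_le_card_neg_eigenvalues {A : Matrix ι ι ℝ}
    (hA : A.IsHermitian) (L : V →ₗ[ℝ] ι → ℝ) (hL : ∀ v ≠ 0, L v ⬝ᵥ A *ᵥ L v < 0) :
    finrank ℝ V ≤ #{i | hA.eigenvalues i < 0} := by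
  simpa using finrank_le_card_pos_of_sum_mul_sq_pos
    ((star (hA.eigenvectorUnitary : Matrix ι ι ℝ)).mulVecLin ∘ₗ L) (-hA.eigenvalues)
    fun v hv => by simpa [← hA.dotProduct_mulVec_eq_sum_eigenvalues] using hL v hv

end Inertia

section SignedEmbedding

variable {ι κ : Type*} [Fintype ι]

theorem dotProduct_mulVec_mulVec_self [Fintype κ] (A : Matrix ι ι ℝ) (P : Matrix ι κ ℝ)
    (c : κ → ℝ) : P *ᵥ c ⬝ᵥ A *ᵥ (P *ᵥ c) = c ⬝ᵥ (Pᵀ * A * P) *ᵥ c := by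
  rw [dotProduct_mulVec c, ← vecMul_vecMul, ← vecMul_vecMul, vecMul_transpose,
    ← dotProduct_mulVec, ← dotProduct_mulVec]

variable [DecidableEq ι]

def signedEmbedding (e : κ → ι) (s : κ → ℝ) : Matrix ι κ ℝ :=
  of fun i a => if i = e a then s a else 0

theorem transpose_signedEmbedding_mul_mul (e : κ → ι) (s : κ → ℝ) (A : Matrix ι ι ℝ) :
    (signedEmbedding e s)ᵀ * A * signedEmbedding e s =
      of fun a b => s a * s b * A (e a) (e b) := by
  ext a b
  simp only [signedEmbedding, mul_apply, transpose_apply, of_apply, ite_mul, zero_mul, sum_ite_eq',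
    mem_univ, ↓reduceIte, mul_ite, mul_zero]
  ring

end SignedEmbedding

def differenceMatrix (m : ℕ) : Matrix (Fin (m + 1)) (Fin m) ℝ :=
  of fun i a => (if i = a.castSucc then 1 else 0) - (if i = a.succ then 1 else 0)

theorem differenceMatrix_transpose_mul_self (m : ℕ) :
    (differenceMatrix m)ᵀ * differenceMatrix m = (CartanMatrix.A m).map (Int.cast : ℤ → ℝ) := by
  ext a b
  simp only [differenceMatrix, mul_apply, transpose_apply, of_apply, sub_mul, mul_sub, ite_mul,
    one_mul, zero_mul, sum_sub_distrib, sum_ite_eq', mem_univ, if_true, map_apply, CartanMatrix.A]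
  simp only [Fin.ext_iff, Fin.val_castSucc, Fin.val_succ]
  split_ifs <;> first | (exfalso; omega) | norm_num

theorem injective_mulVec_differenceMatrix (m : ℕ) :
    Function.Injective (differenceMatrix m).mulVec := by
  let partialSums : Matrix (Fin m) (Fin (m + 1)) ℝ := of fun a i => if i ≤ a.castSucc then 1 else 0
  have hleft : partialSums * differenceMatrix m = 1 := by
    ext a b
    simp only [partialSums, differenceMatrix, mul_apply, of_apply, mul_sub, mul_ite, mul_one,
      mul_zero, sum_sub_distrib, sum_ite_eq', mem_univ, if_true, one_apply]
    simp only [Fin.ext_iff, Fin.le_iff_val_le_val, Fin.val_castSucc, Fin.val_succ]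
    split_ifs <;> first | (exfalso; omega) | norm_num
  refine Function.LeftInverse.injective (g := partialSums.mulVec) fun x => ?_
  rw [mulVec_mulVec, hleft, one_mulVec]

theorem CartanMatrix.posDef_A (m : ℕ) : ((CartanMatrix.A m).map (Int.cast : ℤ → ℝ)).PosDef := by
  rw [← differenceMatrix_transpose_mul_self, ← conjTranspose_eq_transpose_of_trivial]
  exact PosDef.conjTranspose_mul_self _ (injective_mulVec_differenceMatrix m)

section PathMatrix

def pathEntry (m k l : ℕ) : ℝ :=
  if k = l then (if k < m then 2 else if k = m then 0 else -2)
  else if k + 1 = l ∨ l + 1 = k then (if min k l < m then -1 else 1)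
  else 0

/-- `A_m` and `−A_n` joined through a middle vertex (index `m`) of weight `0`. -/
def pathMatrix (m n : ℕ) : Matrix (Fin (m + 1 + n)) (Fin (m + 1 + n)) ℝ :=
  of fun k l => pathEntry m k l

/-- Affine on each side of `m + 1`, and zero at `0` and `m + n + 2`: the ghost vertices just beyond
the two ends of the path. -/
def pathProfile (m n j : ℕ) : ℝ :=
  if j ≤ m + 1 then (n + 1) * j else (m + 1) * (m + n + 2 - j)

variable (m n : ℕ)

theorem pathEntry_self (k : ℕ) :
    pathEntry m k k = if k < m then 2 else if k = m then 0 else -2 := if_pos rfl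

theorem pathEntry_succ (k : ℕ) : pathEntry m k (k + 1) = if k < m then -1 else 1 := by
  simp [pathEntry]

theorem pathEntry_succ_left (k : ℕ) : pathEntry m (k + 1) k = if k < m then -1 else 1 := by
  simp [pathEntry]

theorem sum_range_pathEntry_mul {N k : ℕ} (hk : k < N) (f : ℕ → ℝ) :
    ∑ l ∈ range N, pathEntry m k l * f l =
      pathEntry m k k * f k + (if k + 1 < N then pathEntry m k (k + 1) * f (k + 1) else 0) +
        (if 0 < k then pathEntry m k (k - 1) * f (k - 1) else 0) := by
  have hsplit : ∀ l, pathEntry m k l * f l =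
      (if l = k then pathEntry m k k * f k else 0) +
        (if l = k + 1 then pathEntry m k (k + 1) * f (k + 1) else 0) +
          (if 0 < k ∧ l = k - 1 then pathEntry m k (k - 1) * f (k - 1) else 0) := by
    intro l
    by_cases h0 : l = k
    · subst h0; rw [if_pos rfl, if_neg (by omega), if_neg (by omega)]; ring
    by_cases h1 : l = k + 1
    · subst h1; rw [if_neg (by omega), if_pos rfl, if_neg (by omega)]; ring
    by_cases h2 : 0 < k ∧ l = k - 1
    · obtain ⟨hk0, rfl⟩ := h2
      rw [if_neg (by omega), if_neg (by omega), if_pos ⟨hk0, rfl⟩]; ring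
    simp only [h0, h1, h2, if_false, add_zero, pathEntry]
    rw [if_neg (Ne.symm h0), if_neg (by omega), zero_mul]
  rw [sum_congr rfl fun l _ => hsplit l]
  by_cases h : 0 < k
  · simp only [h, true_and, if_true, sum_add_distrib, sum_ite_eq', mem_range, if_pos hk,
      if_pos (show k - 1 < N by omega)]
  · simp only [h, false_and, if_false, sum_const_zero, sum_add_distrib, sum_ite_eq', mem_range,
      if_pos hk]

theorem pathProfile_of_le {j : ℕ} (h : j ≤ m + 1) : pathProfile m n j = (n + 1) * j := if_pos h

theorem pathProfile_of_ge {j : ℕ} (h : m + 1 ≤ j) :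
    pathProfile m n j = (m + 1) * (m + n + 2 - j) := by
  unfold pathProfile
  split_ifs with h'
  · rw [show (j : ℝ) = m + 1 by exact_mod_cast le_antisymm h' h]
    ring
  · rfl

theorem pathMatrix_mulVec_pathProfile :
    pathMatrix m n *ᵥ (fun k => pathProfile m n (k + 1)) =
      Pi.single (Fin.castAdd n (Fin.last m)) ((n : ℝ) - m) := by
  ext ⟨k, hk⟩
  simp only [mulVec, dotProduct, pathMatrix, of_apply]
  rw [Fin.sum_univ_eq_sum_range (fun l => pathEntry m k l * pathProfile m n (l + 1)),
    sum_range_pathEntry_mul m hk, Pi.single_apply, pathEntry_self, pathEntry_succ]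
  simp only [Fin.ext_iff, Fin.val_castAdd, Fin.val_last]
  have hpred : (if 0 < k then pathEntry m k (k - 1) * pathProfile m n (k - 1 + 1) else 0) =
      (if k ≤ m then -1 else 1) * pathProfile m n k := by
    rcases k with _ | j
    · simp [pathProfile_of_le]
    · rw [if_pos j.succ_pos, Nat.add_sub_cancel, pathEntry_succ_left]
      exact congrArg (· * _) (if_congr Nat.lt_iff_add_one_le rfl rfl)
  have hsucc : (if k + 1 < m + 1 + n then
      (if k < m then -1 else 1) * pathProfile m n (k + 1 + 1) else 0) =
      (if k < m then -1 else 1) * pathProfile m n (k + 1 + 1) := by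
    by_cases hlast : k + 1 < m + 1 + n
    · rw [if_pos hlast]
    · have hkl : (k : ℝ) = m + n := by exact_mod_cast (by omega : k = m + n)
      rw [if_neg hlast, pathProfile_of_ge _ _ (by omega)]
      push_cast [hkl]
      ring
  rw [hpred, hsucc]
  rcases lt_trichotomy k m with hlt | rfl | hgt
  · rw [if_pos hlt, if_pos hlt, if_pos hlt.le, if_neg hlt.ne, pathProfile_of_le _ _ (by omega),
      pathProfile_of_le _ _ (by omega), pathProfile_of_le _ _ (by omega)]
    push_cast
    ring
  · simp only [lt_irrefl, le_refl, if_true, if_false, zero_mul, zero_add]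
    rw [pathProfile_of_ge k n (by omega : k + 1 ≤ k + 1 + 1), pathProfile_of_le k n (by omega)]
    push_cast
    ring
  · rw [if_neg (by omega), if_neg (by omega), if_neg (by omega), if_neg (by omega),
      if_neg (by omega),
      pathProfile_of_ge _ _ (by omega), pathProfile_of_ge _ _ (by omega),
      pathProfile_of_ge _ _ (by omega)]
    push_cast
    ring

theorem pathMatrix_transpose : (pathMatrix m n)ᵀ = pathMatrix m n := by
  ext k l
  simp only [pathMatrix, transpose_apply, of_apply, pathEntry]
  split_ifs <;> first | rfl | (exfalso; omega)

theorem pathMatrix_positiveBlock :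
    (signedEmbedding (fun a : Fin m => Fin.castAdd n a.castSucc) 1)ᵀ * pathMatrix m n *
      signedEmbedding (fun a : Fin m => Fin.castAdd n a.castSucc) 1 =
    (CartanMatrix.A m).map (Int.cast : ℤ → ℝ) := by
  rw [transpose_signedEmbedding_mul_mul]
  ext a b
  simp only [of_apply, Pi.one_apply, one_mul, pathMatrix, pathEntry, map_apply, CartanMatrix.A,
    Fin.val_castAdd, Fin.val_castSucc, Fin.ext_iff]
  split_ifs <;> first | (exfalso; omega) | norm_num

theorem pathMatrix_negativeBlock :
    (signedEmbedding (Fin.natAdd (m + 1) : Fin n → _) 1)ᵀ * pathMatrix m n *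
      signedEmbedding (Fin.natAdd (m + 1) : Fin n → _) 1 =
    -((CartanMatrix.A n).map (Int.cast : ℤ → ℝ)) := by
  rw [transpose_signedEmbedding_mul_mul]
  ext a b
  simp only [of_apply, Pi.one_apply, one_mul, pathMatrix, pathEntry, Matrix.neg_apply, map_apply,
    CartanMatrix.A, Fin.val_natAdd, Fin.ext_iff]
  split_ifs <;> first | (exfalso; omega) | norm_num

theorem pathMatrix_exists_posDefinite (hmn : m < n) :
    ∃ L : ((Fin m → ℝ) × ℝ) →ₗ[ℝ] Fin (m + 1 + n) → ℝ,
      ∀ v ≠ 0, 0 < L v ⬝ᵥ pathMatrix m n *ᵥ L v := by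
  set P := signedEmbedding (fun a : Fin m => Fin.castAdd n a.castSucc) 1
  set y : Fin (m + 1 + n) → ℝ := fun k => pathProfile m n (k + 1)
  set β : Fin (m + 1 + n) := Fin.castAdd n (Fin.last m)
  refine ⟨P.mulVecLin.coprod (LinearMap.toSpanSingleton ℝ _ y), ?_⟩
  rintro ⟨c, t⟩ hv
  simp only [LinearMap.coprod_apply, mulVecLin_apply, LinearMap.toSpanSingleton_apply]
  have hPβ : (P *ᵥ c) β = 0 := by
    simp only [P, β, signedEmbedding, mulVec, dotProduct, of_apply, Pi.one_apply, ite_mul,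
      one_mul, zero_mul, Fin.ext_iff, Fin.val_castAdd, Fin.val_last, Fin.val_castSucc]
    exact sum_eq_zero fun a _ => if_neg a.isLt.ne'
  have hyβ : y β = (n + 1) * (m + 1) := by
    simp only [y, β, Fin.val_castAdd, Fin.val_last, pathProfile_of_le m n le_rfl]
    push_cast
    ring
  have hsymm : y ⬝ᵥ pathMatrix m n *ᵥ (P *ᵥ c) = P *ᵥ c ⬝ᵥ pathMatrix m n *ᵥ y := by
    rw [← dotProduct_transpose_mulVec, pathMatrix_transpose]
  have hform : (P *ᵥ c + t • y) ⬝ᵥ pathMatrix m n *ᵥ (P *ᵥ c + t • y) =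
      c ⬝ᵥ ((CartanMatrix.A m).map (Int.cast : ℤ → ℝ)) *ᵥ c +
        t ^ 2 * (((n : ℝ) - m) * ((n + 1) * (m + 1))) := by
    rw [mulVec_add, mulVec_smul, add_dotProduct, dotProduct_add, dotProduct_add, smul_dotProduct,
      smul_dotProduct, dotProduct_smul, dotProduct_smul, hsymm, dotProduct_mulVec_mulVec_self,
      pathMatrix_positiveBlock, pathMatrix_mulVec_pathProfile, dotProduct_single,
      dotProduct_single, hPβ, hyβ, smul_eq_mul, smul_eq_mul]
    ring
  have hnm : (0 : ℝ) < n - m := sub_pos.mpr (by exact_mod_cast hmn)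
  rw [hform]
  rcases eq_or_ne c 0 with rfl | hc
  · have ht : t ≠ 0 := by rintro rfl; exact hv rfl
    rw [mulVec_zero, dotProduct_zero, zero_add]
    have := sq_pos_of_ne_zero ht
    positivity
  · have := (CartanMatrix.posDef_A m).dotProduct_mulVec_pos hc
    rw [star_trivial] at this
    positivity

theorem pathMatrix_exists_negDefinite :
    ∃ L : (Fin n → ℝ) →ₗ[ℝ] Fin (m + 1 + n) → ℝ, ∀ v ≠ 0, L v ⬝ᵥ pathMatrix m n *ᵥ L v < 0 :=
  ⟨(signedEmbedding (Fin.natAdd (m + 1)) 1).mulVecLin, fun c hc => by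
    rw [mulVecLin_apply, dotProduct_mulVec_mulVec_self, pathMatrix_negativeBlock, neg_mulVec,
      dotProduct_neg, neg_lt_zero]
    simpa using (CartanMatrix.posDef_A n).dotProduct_mulVec_pos hc⟩

end PathMatrix

/-- The `k`-th vertex (0-based) of the path `1, …, p−2, α, p−1, …, q−3, β, q−2, …, 2q−4`, as a
0-based index of `QI_I p q`. -/
def pathIndex (p q k : ℕ) : ℕ :=
  if k < p - 2 then k else if k = p - 2 then 2 * q - 4 else if k < q - 2 then k - 1
  else if k = q - 2 then 2 * q - 3 else k - 2

def pathSign (p q k : ℕ) : ℝ := if k = p - 2 ∨ k = q - 2 then -1 else 1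

theorem pathIndex_lt {p q k : ℕ} (hq : 2 ≤ q) (hk : k < q - 2 + 1 + (q - 1)) :
    pathIndex p q k < 2 * q - 2 := by
  unfold pathIndex
  split_ifs <;> omega

def pathEmbedding (p : ℕ) {q : ℕ} (hq : 2 ≤ q) (k : Fin (q - 2 + 1 + (q - 1))) : Fin (2 * q - 2) :=
  ⟨pathIndex p q k, pathIndex_lt hq k.isLt⟩

theorem pathRegion_cases {a b k : ℕ} (hk : k < 2 * a + 2 * b + 8) :
    k < a + 1 ∨ k = a + 1 ∨ (∃ r < b + 1, k = a + r + 2) ∨ k = a + b + 3 ∨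
      ∃ r < a + b + 4, k = a + b + r + 4 := by
  by_cases h1 : k < a + 1
  · exact Or.inl h1
  by_cases h2 : k = a + 1
  · exact Or.inr (Or.inl h2)
  by_cases h3 : k < a + b + 3
  · exact Or.inr (Or.inr (Or.inl ⟨k - (a + 2), by omega, by omega⟩))
  by_cases h4 : k = a + b + 3
  · exact Or.inr (Or.inr (Or.inr (Or.inl h4)))
  · exact Or.inr (Or.inr (Or.inr (Or.inr ⟨k - (a + b + 4), by omega, by omega⟩)))

-- Writing `p = a + 3` and `q = a + b + 5` removes every truncated subtraction, so that each of the
-- 25 pairs of path regions is decided by `omega`.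
set_option maxHeartbeats 1000000 in
theorem pathSign_mul_QIIent_pathIndex {p q : ℕ} (hp : 3 ≤ p) (hq : p + 2 ≤ q) {k l : ℕ}
    (hk : k < 2 * q - 2) (hl : l < 2 * q - 2) :
    pathSign p q k * pathSign p q l * (QIIent p q (pathIndex p q k + 1) (pathIndex p q l + 1) : ℝ) =
      pathEntry (q - 2) k l := by
  obtain ⟨a, rfl⟩ : ∃ a, p = a + 3 := ⟨p - 3, by omega⟩
  obtain ⟨b, rfl⟩ : ∃ b, q = a + b + 5 := ⟨q - (a + 5), by omega⟩
  rcases pathRegion_cases (by omega : k < 2 * a + 2 * b + 8)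
    with hk' | rfl | ⟨r, hr, rfl⟩ | rfl | ⟨r, hr, rfl⟩ <;>
  rcases pathRegion_cases (by omega : l < 2 * a + 2 * b + 8)
    with hl' | rfl | ⟨s, hs, rfl⟩ | rfl | ⟨s, hs, rfl⟩ <;>
  clear hk hl hp hq
  all_goals
    simp only [pathSign, pathIndex, Nat.mul_add, Nat.reduceMul, Nat.reduceSubDiff, true_or,
      or_true, ↓reduceIte]
    try simp (disch := omega) only [if_pos, if_neg]
    simp only [QIIent, triEnt, pathEntry, Nat.mul_add, Nat.reduceMul, Nat.reduceSubDiff]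
    try simp (disch := omega) only [if_pos, if_neg]
    try simp only [true_and, and_true, ↓reduceIte]
  all_goals
    (try split_ifs) <;> first | (exfalso; omega) | norm_num

theorem QI_I_congr_pathMatrix {p q : ℕ} (hp : 3 ≤ p) (hq : p + 2 ≤ q) :
    (signedEmbedding (pathEmbedding p (by omega : 2 ≤ q)) (fun k => pathSign p q k))ᵀ *
        (QI_I p q).map (Int.cast : ℤ → ℝ) *
        signedEmbedding (pathEmbedding p (by omega : 2 ≤ q)) (fun k => pathSign p q k) =
      pathMatrix (q - 2) (q - 1) := by
  rw [transpose_signedEmbedding_mul_mul]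
  ext k l
  simp only [of_apply, map_apply, QI_I, pathMatrix, pathEmbedding]
  exact_mod_cast pathSign_mul_QIIent_pathIndex hp hq (by omega) (by omega)

theorem QI_I_eigenvalue_counts (p q : ℕ) (hp : 3 ≤ p) (hq : p + 2 ≤ q)
    (hM : ((QI_I p q).map (Int.cast : ℤ → ℝ)).IsHermitian) :
    (Finset.univ.filter (fun i => 0 < hM.eigenvalues i)).card = q - 1 ∧
    (Finset.univ.filter (fun i => hM.eigenvalues i < 0)).card = q - 1 := by
  set S := signedEmbedding (pathEmbedding p (by omega : 2 ≤ q)) (fun k => pathSign p q k)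
  have hform (z) : S *ᵥ z ⬝ᵥ (QI_I p q).map (Int.cast : ℤ → ℝ) *ᵥ (S *ᵥ z) =
      z ⬝ᵥ pathMatrix (q - 2) (q - 1) *ᵥ z := by
    rw [dotProduct_mulVec_mulVec_self, QI_I_congr_pathMatrix hp hq]
  obtain ⟨Lpos, hLpos⟩ := pathMatrix_exists_posDefinite (q - 2) (q - 1) (by omega)
  obtain ⟨Lneg, hLneg⟩ := pathMatrix_exists_negDefinite (q - 2) (q - 1)
  have hpos := hM.finrank_le_card_pos_eigenvalues (S.mulVecLin ∘ₗ Lpos)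
    fun v hv => by rw [LinearMap.comp_apply, mulVecLin_apply, hform]; exact hLpos v hv
  have hneg := hM.finrank_le_card_neg_eigenvalues (S.mulVecLin ∘ₗ Lneg)
    fun v hv => by rw [LinearMap.comp_apply, mulVecLin_apply, hform]; exact hLneg v hv
  have htotal : #{i | 0 < hM.eigenvalues i} + #{i | hM.eigenvalues i < 0} ≤ 2 * q - 2 := by
    rw [← card_union_of_disjoint (disjoint_filter.2 fun _ _ => lt_asymm)]
    exact (card_le_univ _).trans_eq (Fintype.card_fin _)
  simp only [finrank_prod, finrank_fin_fun, finrank_self] at hpos hneg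
  omega
end

section
/- For every integer n with n > 431 and n ≠ 461, there exist positive integers u, v, w and integers p, q, r with 2 ≤ p < q < r such that n = u²p(p−1) + v²q(q−1) + w²r(r−1) + 2uvq(p−1) + 2uwr(p−1) + 2vwr(q−1) + u + v + w. -/
/-!
With `v = w = 1` the form collapses to
`dIII p q r u 1 1 = M ^ 2 + u (u + 2) (p - 1) + u + 1 - (r - q)`, where `M = u (p - 1) + q + r - 1`.
Fixing `u`, `p` and `M` and letting the gap `r - q` run over the admissible values of the right
parity, this hits every `n ≡ u (mod 2)` in a window of length about `M` just below
`M ^ 2 + u (u + 2) (p - 1) + u`. Place `n - 11` (odd `n`) or `n - 18` (even `n`) within `M` of a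
square `M ^ 2`. For odd `n` the windows of `u = 1` with varying `p` cover `n ≤ M ^ 2 + M - 7`, those
of `u = 3` cover the rest once `M ≥ 38`; for even `n` the windows of `u = 2` suffice once `M ≥ 44`.
For smaller `M` the windows of `p = 2` with `u ∈ {5, 7}`, resp. `u ∈ {4, 6, 8}`, leave only finitely
many `n`, each of which gets an explicit witness.
-/

/-- `d(p, q, r, u, v, w) = d₃ + 1/2` for the overtwisted contact structure on S³ supported by
the real algebraic open book of the graph multilink of splice type (I-I-I). -/
def dIII (p q r u v w : ℤ) : ℤ :=
  u^2 * p * (p - 1) + v^2 * q * (q - 1) + w^2 * r * (r - 1)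
    + 2*u*v * q * (p - 1) + 2*u*w * r * (p - 1) + 2*v*w * r * (q - 1) + u + v + w

def IsDIIIValue (n : ℤ) : Prop :=
  ∃ u v w p q r : ℤ, 0 < u ∧ 0 < v ∧ 0 < w ∧ 2 ≤ p ∧ p < q ∧ q < r ∧ n = dIII p q r u v w

theorem dIII_one_one (p q r u : ℤ) :
    dIII p q r u 1 1 = (u * (p - 1) + q + r - 1) ^ 2 + u * (u + 2) * (p - 1) + u + 1 - (r - q) := by
  unfold dIII
  ring

theorem isDIIIValue_of_window {n u p M : ℤ} (hu : 0 < u) (hp : 2 ≤ p) (hpar : Even (n - u))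
    (hlo : M ^ 2 - M + (u + 2) * ((u + 1) * p - u) + 2 ≤ n)
    (hhi : n ≤ M ^ 2 + u * (u + 2) * (p - 1) + u) : IsDIIIValue n := by
  set b := M ^ 2 + u * (u + 2) * (p - 1) + u + 1 - n with hb
  obtain ⟨q, hq⟩ : Even (M - u * (p - 1) + 1 - b) := by
    have h : M - u * (p - 1) + 1 - b
        = (n - u) - M * (M - 1) - u * (u + 1) * (p - 1) - 2 * (u * (p - 1)) := by
      rw [hb]; ring
    rw [h]
    exact ((hpar.sub (Int.even_mul_pred_self M)).sub
      ((Int.even_mul_succ_self u).mul_right _)).sub (even_two_mul _)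
  refine ⟨u, 1, 1, p, q, q + b, hu, one_pos, one_pos, hp, ?_, ?_, ?_⟩
  · nlinarith
  · linarith
  · rw [dIII_one_one, show u * (p - 1) + q + (q + b) - 1 = M by linarith]
    ring

theorem exists_sq_sub_le_and_lt_sq_add {x : ℤ} (hx : 0 ≤ x) :
    ∃ M : ℤ, 0 ≤ M ∧ M ^ 2 - M ≤ x ∧ x < M ^ 2 + M := by
  lift x to ℕ using hx
  have hle : ((Nat.sqrt x : ℕ) : ℤ) ^ 2 ≤ x := by exact_mod_cast Nat.sqrt_le' x
  have hlt : (x : ℤ) < ((Nat.sqrt x : ℕ) + 1) ^ 2 := by exact_mod_cast Nat.lt_succ_sqrt' x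
  by_cases h : (x : ℤ) < (Nat.sqrt x : ℤ) ^ 2 + Nat.sqrt x
  · exact ⟨Nat.sqrt x, by positivity, by linarith, h⟩
  · exact ⟨Nat.sqrt x + 1, by positivity, by linarith, by linarith⟩

theorem isDIIIValue_of_odd_of_le_sq_add {n M : ℤ} (hn : Odd n) (hlo : M ^ 2 - M + 11 ≤ n)
    (hhi : n ≤ M ^ 2 + M - 7) : IsDIIIValue n := by
  have hpar : Even (n - 1) := hn.sub_odd odd_one
  refine isDIIIValue_of_window (p := max 2 ((n - M ^ 2 + 4) / 3)) (M := M) one_pos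
    (le_max_left _ _) hpar ?_ ?_ <;> omega

theorem isDIIIValue_of_odd_of_le_sq_add_three_mul {n M : ℤ} (hn : Odd n) (hlo : M ^ 2 + 4 ≤ n)
    (hhi : n ≤ M ^ 2 + 3 * M - 65) : IsDIIIValue n := by
  have hpar : Even (n - 3) := hn.sub_odd (by decide)
  refine isDIIIValue_of_window (p := (n - M ^ 2 + 26) / 15) (M := M) (by norm_num)
    (by omega) hpar ?_ ?_ <;> omega

theorem isDIIIValue_of_even_of_le_sq_add_two_mul {n M : ℤ} (hn : Even n)
    (hlo : M ^ 2 - M + 18 ≤ n) (hhi : n ≤ M ^ 2 + 2 * M - 27) : IsDIIIValue n := by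
  have hpar : Even (n - 2) := hn.sub even_two
  refine isDIIIValue_of_window (p := max 2 ((n - M ^ 2 + 13) / 8)) (M := M) two_pos
    (le_max_left _ _) hpar ?_ ?_ <;> omega

theorem isDIIIValue_of_window_of_p_eq_two {n u M : ℤ} (hu : 0 < u) (hpar : Even (n - u))
    (hlo : M ^ 2 - M + (u + 2) ^ 2 + 2 ≤ n) (hhi : n ≤ M ^ 2 + u ^ 2 + 3 * u) : IsDIIIValue n :=
  isDIIIValue_of_window (M := M) hu le_rfl hpar (by linarith) (by linarith)

/-- Tuples `(u, v, w, p, q, r)`; note the order differs from the arguments of `dIII`. -/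
def sporadicWitnesses : List (ℤ × ℤ × ℤ × ℤ × ℤ × ℤ) := [
  (3, 1, 2, 2, 3, 8), (3, 2, 1, 2, 5, 9), (4, 5, 1, 2, 3, 4), (1, 3, 1, 2, 3, 14),
  (3, 3, 3, 2, 3, 4), (2, 1, 2, 2, 3, 9), (2, 6, 1, 2, 3, 5), (2, 5, 2, 2, 3, 4),
  (8, 2, 1, 2, 3, 7), (3, 3, 2, 2, 3, 6), (4, 5, 1, 2, 3, 5), (4, 4, 2, 2, 3, 4),
  (3, 2, 3, 2, 3, 5), (2, 2, 2, 2, 3, 8), (3, 1, 1, 2, 9, 11), (3, 2, 4, 2, 3, 4),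
  (9, 1, 1, 2, 4, 8), (8, 2, 1, 2, 3, 8), (2, 4, 3, 2, 3, 4), (1, 2, 2, 2, 3, 9),
  (2, 5, 1, 2, 3, 9), (4, 3, 3, 2, 3, 4), (1, 4, 1, 2, 3, 13), (2, 4, 2, 2, 3, 6),
  (3, 6, 1, 2, 3, 5), (2, 5, 2, 2, 3, 5), (2, 2, 3, 2, 3, 6), (3, 1, 5, 2, 3, 4),
  (8, 1, 2, 2, 3, 6), (2, 3, 4, 2, 3, 4), (1, 2, 1, 3, 7, 9), (3, 2, 1, 2, 5, 12),
  (4, 2, 4, 2, 3, 4), (8, 1, 1, 2, 3, 12), (2, 2, 2, 2, 3, 9), (3, 4, 3, 2, 3, 4),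
  (10, 2, 1, 2, 3, 7), (3, 7, 1, 2, 3, 4), (10, 1, 2, 2, 3, 5), (7, 2, 2, 2, 3, 6),
  (5, 6, 1, 2, 3, 4), (3, 5, 2, 2, 3, 5), (3, 4, 1, 2, 4, 8), (4, 1, 5, 2, 3, 4),
  (3, 3, 2, 2, 4, 6), (3, 3, 4, 2, 3, 4), (5, 3, 1, 2, 3, 13), (9, 2, 2, 2, 3, 5),
  (13, 1, 1, 2, 4, 5), (8, 1, 1, 2, 3, 14), (9, 2, 1, 2, 3, 10), (1, 6, 1, 2, 3, 11),
  (12, 1, 1, 2, 3, 8), (4, 7, 1, 2, 3, 4), (2, 3, 3, 2, 3, 6), (7, 3, 1, 2, 4, 8),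
  (2, 8, 1, 2, 3, 5), (3, 4, 3, 2, 3, 5), (4, 6, 2, 2, 3, 4), (9, 1, 2, 2, 3, 7),
  (6, 3, 1, 2, 3, 13), (10, 3, 1, 2, 3, 7), (2, 6, 3, 2, 3, 4), (4, 5, 3, 2, 3, 4),
  (11, 1, 2, 2, 3, 6), (2, 6, 2, 2, 3, 6), (8, 2, 2, 2, 3, 7), (1, 5, 2, 2, 3, 8),
  (10, 2, 2, 2, 3, 6), (3, 3, 4, 2, 3, 5), (13, 1, 2, 2, 3, 5), (10, 1, 3, 2, 3, 5),
  (1, 5, 2, 2, 3, 9), (11, 4, 1, 2, 3, 6), (8, 4, 2, 2, 3, 6), (1, 3, 7, 2, 3, 4),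
  (11, 5, 1, 2, 3, 8), (5, 6, 4, 2, 3, 4), (12, 4, 1, 2, 4, 6), (5, 1, 5, 2, 3, 6),
  (6, 10, 1, 2, 3, 4), (1, 13, 1, 2, 3, 4), (1, 5, 1, 2, 3, 25), (13, 1, 5, 2, 3, 4),
  (10, 3, 4, 2, 3, 5), (5, 3, 7, 2, 3, 4), (13, 4, 3, 2, 3, 5), (3, 1, 10, 2, 3, 4),
  (1, 11, 4, 2, 3, 4), (2, 10, 2, 2, 3, 9)]

theorem isDIIIValue_of_mem_sporadic {n : ℤ}
    (h : n ∈ sporadicWitnesses.map fun (u, v, w, p, q, r) => dIII p q r u v w) :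
    IsDIIIValue n := by
  have hadm : ∀ t ∈ sporadicWitnesses, 0 < t.1 ∧ 0 < t.2.1 ∧ 0 < t.2.2.1 ∧ 2 ≤ t.2.2.2.1 ∧
      t.2.2.2.1 < t.2.2.2.2.1 ∧ t.2.2.2.2.1 < t.2.2.2.2.2 := by decide
  obtain ⟨⟨u, v, w, p, q, r⟩, ht, rfl⟩ := List.mem_map.1 h
  obtain ⟨hu, hv, hw, hp, hpq, hqr⟩ := hadm _ ht
  exact ⟨u, v, w, p, q, r, hu, hv, hw, hp, hpq, hqr, rfl⟩

theorem isDIIIValue_of_odd {n : ℤ} (hn : 431 < n) (hn' : n ≠ 461) (hodd : Odd n) :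
    IsDIIIValue n := by
  obtain ⟨M, hM0, hlo, hhi⟩ := exists_sq_sub_le_and_lt_sq_add (x := n - 11) (by omega)
  by_cases hu1 : n ≤ M ^ 2 + M - 7
  · exact isDIIIValue_of_odd_of_le_sq_add hodd (by linarith) hu1
  by_cases hu3 : 38 ≤ M
  · exact isDIIIValue_of_odd_of_le_sq_add_three_mul hodd (by linarith) (by linarith)
  have hpar : n % 2 = 1 := Int.odd_iff.1 hodd
  by_cases hu5 : M ^ 2 - M + 51 ≤ n ∧ n ≤ M ^ 2 + 40
  · exact isDIIIValue_of_window_of_p_eq_two (u := 5) (M := M) (by norm_num)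
      (Int.even_iff.2 (by omega)) (by linarith) (by linarith)
  by_cases hu7 : M ^ 2 - M + 83 ≤ n ∧ n ≤ M ^ 2 + 70
  · exact isDIIIValue_of_window_of_p_eq_two (u := 7) (M := M) (by norm_num)
      (Int.even_iff.2 (by omega)) (by linarith) (by linarith)
  apply isDIIIValue_of_mem_sporadic
  simp only [sporadicWitnesses, List.map_cons, List.map_nil, List.mem_cons, List.not_mem_nil,
    or_false, dIII]
  norm_num
  interval_cases M <;> omega

theorem isDIIIValue_of_even {n : ℤ} (hn : 431 < n) (heven : Even n) : IsDIIIValue n := by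
  obtain ⟨M, hM0, hlo, hhi⟩ := exists_sq_sub_le_and_lt_sq_add (x := n - 18) (by omega)
  by_cases hu2 : n ≤ M ^ 2 + 2 * M - 27
  · exact isDIIIValue_of_even_of_le_sq_add_two_mul heven (by linarith) hu2
  have hpar : n % 2 = 0 := Int.even_iff.1 heven
  by_cases hu4 : M ^ 2 - M + 38 ≤ n ∧ n ≤ M ^ 2 + 28
  · exact isDIIIValue_of_window_of_p_eq_two (u := 4) (M := M) (by norm_num)
      (Int.even_iff.2 (by omega)) (by linarith) (by linarith)
  by_cases hu6 : M ^ 2 - M + 66 ≤ n ∧ n ≤ M ^ 2 + 54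
  · exact isDIIIValue_of_window_of_p_eq_two (u := 6) (M := M) (by norm_num)
      (Int.even_iff.2 (by omega)) (by linarith) (by linarith)
  by_cases hu8 : M ^ 2 - M + 102 ≤ n ∧ n ≤ M ^ 2 + 88
  · exact isDIIIValue_of_window_of_p_eq_two (u := 8) (M := M) (by norm_num)
      (Int.even_iff.2 (by omega)) (by linarith) (by linarith)
  have hM44 : M < 44 := by linarith
  apply isDIIIValue_of_mem_sporadic
  simp only [sporadicWitnesses, List.map_cons, List.map_nil, List.mem_cons, List.not_mem_nil,
    or_false, dIII]
  norm_num
  interval_cases M <;> omega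

theorem dIII_surjective_above_431 (n : ℤ) (hn : 431 < n) (hn' : n ≠ 461) :
    ∃ u v w p q r : ℤ, 0 < u ∧ 0 < v ∧ 0 < w ∧ 2 ≤ p ∧ p < q ∧ q < r ∧
      n = dIII p q r u v w :=
  (Int.even_or_odd n).elim (isDIIIValue_of_even hn) (isDIIIValue_of_odd hn hn')
end
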